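/- arXiv:1311.4425 — 3 statements merged into one kernel-verified Lean document; each statement's English description precedes it below -/
import Mathlib

section
/- (Finite-trace Reduction Theorem.) Let G = (V, E, x) and G' = (V', E', x') be topologies with k-tuples ḡ, ḡ' of pairwise distinct vertices and labelings Λ, Λ'. Assume that { List.destutter (· ≠ ·) [Λ(w₀), …, Λ(w_M)] : w₀ … w_M a walk in G from x } = { List.destutter (· ≠ ·) [Λ'(w'₀), …, Λ'(w'_{M'})] : w'₀ … w'_{M'} a walk in G' from x' }. Then for every process template P, { List.destutter (· ≠ ·) of the ḡ-projection trace of ρ : ρ a finite run of P^G } = { List.destutter (· ≠ ·) of the ḡ'-projection trace of ρ' : ρ' a finite run of P^{G'} }. -/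
/-!
The destuttered `ḡ`-trace of a run records only the local states of the marked processes, and
between two visits of the token to marked vertices the token wanders through unmarked vertices,
invisibly to the trace. So a run of `P^G` can be replayed in `P^{G'}` along a walk `w'` of `G'`
whose destuttered labels agree with those of the walk of the token in `G`: moves of marked
processes are copied, moves between unmarked vertices are dropped, and whenever the token of `G`
reaches a new label, the token of `G'` is passed along `w'` to the next vertex with that label.
An unmarked process on the way can always be brought, by internal steps, to a state where it
receives resp. sends the token, because an infinite path of internal actions would violate the
alternation condition of the template. The reverse inclusion follows by symmetry.
-/

noncomputable def dst {α : Type} (l : List α) : List α :=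
  @List.destutter α (· ≠ ·) (fun _ _ => Classical.dec _) l

/-- A topology: a finite nonempty directed graph with no self-loops. -/
structure Topo where
  V : Type
  fintypeV : Fintype V
  decEqV : DecidableEq V
  nonemptyV : Nonempty V
  E : V → V → Prop
  no_self_loops : ∀ v, ¬ E v v

attribute [instance] Topo.fintypeV Topo.decEqV Topo.nonemptyV

/-- Actions of a process: internal actions from `A = Σint`, plus `snd`, `rcv`. -/
inductive Act (A : Type) where
  | int : A → Act A
  | snd : Act A
  | rcv : Act A

/-- A process template `P = (Q, δ, tok, ιt, ιn)`.  The field `alternation`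
encodes that every infinite action-labeled path of `P` lies in
`(Σint* snd Σint* rcv)^ω ∪ (Σint* rcv Σint* snd)^ω`: every infinite path has
infinitely many non-internal actions, between any two `snd`s there is a `rcv`,
and between any two `rcv`s there is a `snd`. -/
structure ProcTemplate (A : Type) where
  Q : Type
  fintypeQ : Fintype Q
  decEqQ : DecidableEq Q
  tok : Q → Prop
  iotaT : Q
  iotaN : Q
  tok_iotaT : tok iotaT
  not_tok_iotaN : ¬ tok iotaN
  δ : Q → Act A → Q → Prop
  snd_tok : ∀ {q q'}, δ q Act.snd q' → tok q ∧ ¬ tok q'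
  rcv_tok : ∀ {q q'}, δ q Act.rcv q' → ¬ tok q ∧ tok q'
  int_tok : ∀ {q a q'}, δ q (Act.int a) q' → (tok q ↔ tok q')
  total : ∀ q, ∃ σ q', δ q σ q'
  alternation : ∀ (q : ℕ → Q) (a : ℕ → Act A),
    (∀ t, δ (q t) (a t) (q (t + 1))) →
      (∀ t, ∃ t', t ≤ t' ∧ (a t' = Act.snd ∨ a t' = Act.rcv)) ∧
      (∀ t₁ t₂, t₁ < t₂ → a t₁ = Act.snd → a t₂ = Act.snd →
        ∃ t, t₁ < t ∧ t < t₂ ∧ a t = Act.rcv) ∧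
      (∀ t₁ t₂, t₁ < t₂ → a t₁ = Act.rcv → a t₂ = Act.rcv →
        ∃ t, t₁ < t ∧ t < t₂ ∧ a t = Act.snd)

attribute [instance] ProcTemplate.fintypeQ ProcTemplate.decEqQ

/-- The initial global state of `P^G` with initial vertex `x`. -/
def gInit {A : Type} (P : ProcTemplate A) (G : Topo) (x : G.V) : G.V → P.Q :=
  fun v => if v = x then P.iotaT else P.iotaN

/-- Internal transitions of `P^G`: one process moves via an internal action. -/
def IntTrans {A : Type} (P : ProcTemplate A) (G : Topo) (s s' : G.V → P.Q) : Prop :=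
  ∃ v a, P.δ (s v) (Act.int a) (s' v) ∧ ∀ w, w ≠ v → s' w = s w

/-- Token-passing transitions of `P^G`: a process sends the token to another
along an edge of `G`. -/
def TokTrans {A : Type} (P : ProcTemplate A) (G : Topo) (s s' : G.V → P.Q) : Prop :=
  ∃ v w, G.E v w ∧ P.δ (s v) Act.snd (s' v) ∧ P.δ (s w) Act.rcv (s' w) ∧
    ∀ u, u ≠ v → u ≠ w → s' u = s u

/-- Global transitions of `P^G`. -/
def GStep {A : Type} (P : ProcTemplate A) (G : Topo) (s s' : G.V → P.Q) : Prop :=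
  IntTrans P G s s' ∨ TokTrans P G s s'

/-- A finite run of `P^G` (as a nonempty list of global states starting at the
initial state, consecutive states related by transitions). -/
def IsFinRun {A : Type} (P : ProcTemplate A) (G : Topo) (x : G.V)
    (ρ : List (G.V → P.Q)) : Prop :=
  ρ ≠ [] ∧ ρ.head? = some (gInit P G x) ∧ List.Chain' (GStep P G) ρ

/-- A walk in `G` from `x`: a nonempty list of vertices starting at `x` with an
edge between consecutive entries. -/
def IsWalkFrom (G : Topo) (x : G.V) (w : List G.V) : Prop :=
  w ≠ [] ∧ w.head? = some x ∧ List.Chain' G.E w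

/-- The labeling `Λ` induced by a marked `k`-tuple `g`. -/
def lab {k : ℕ} (G : Topo) (g : Fin k → G.V) (v : G.V) : Finset (Fin k) :=
  Finset.univ.filter fun i => g i = v

/-- The `ḡ`-projection trace of a finite run: the list of `k`-tuples of local
states of the processes at the marked vertices. -/
def projTrace {A : Type} {k : ℕ} (P : ProcTemplate A) (G : Topo)
    (g : Fin k → G.V) (ρ : List (G.V → P.Q)) : List (Fin k → P.Q) :=
  ρ.map fun s i => s (g i)

open Function

section Destutter

variable {α β : Type}

theorem dst_eq_nil {l : List α} : dst l = [] ↔ l = [] :=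
  @List.destutter_eq_nil _ _ (fun _ _ => Classical.dec _) _

theorem dst_idem (l : List α) : dst (dst l) = dst l :=
  @List.destutter_idem _ _ _ (fun _ _ => Classical.dec _)

theorem dst_cons_cons_of_eq (a : α) (l : List α) : dst (a :: a :: l) = dst (a :: l) := by
  rw [dst, List.destutter_cons_cons, if_neg (not_not.mpr rfl)]; rfl

theorem dst_cons_cons_of_ne {a b : α} (h : a ≠ b) (l : List α) :
    dst (a :: b :: l) = a :: dst (b :: l) := by
  rw [dst, List.destutter_cons_cons, if_pos h]; rfl

theorem head?_dst (l : List α) : (dst l).head? = l.head? := by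
  match l with
  | [] | [_] => rfl
  | a :: b :: l =>
    by_cases hab : a = b
    · subst hab; rw [dst_cons_cons_of_eq, head?_dst]; rfl
    · rw [dst_cons_cons_of_ne hab]; rfl

theorem getLast?_dst (l : List α) : (dst l).getLast? = l.getLast? := by
  match l with
  | [] | [_] => rfl
  | a :: b :: l =>
    by_cases hab : a = b
    · subst hab; rw [dst_cons_cons_of_eq, getLast?_dst, List.getLast?_cons_cons]
    · rw [dst_cons_cons_of_ne hab, List.getLast?_cons_of_ne_nil (by simp [dst_eq_nil]),
        getLast?_dst, List.getLast?_cons_cons]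

theorem dst_concat_of_getLast?_eq {l : List α} {c : α} (h : l.getLast? = some c) :
    dst (l ++ [c]) = dst l := by
  match l, h with
  | [a], h =>
    obtain rfl : a = c := by simpa using h
    exact dst_cons_cons_of_eq a []
  | a :: b :: l, h =>
    rw [List.getLast?_cons_cons] at h
    have ih := dst_concat_of_getLast?_eq h
    by_cases hab : a = b
    · subst hab; rw [List.cons_append, List.cons_append, dst_cons_cons_of_eq, ← List.cons_append,
        ih, dst_cons_cons_of_eq]
    · rw [List.cons_append, List.cons_append, dst_cons_cons_of_ne hab, ← List.cons_append, ih,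
        dst_cons_cons_of_ne hab]

theorem dst_concat_of_getLast?_ne {l : List α} {c : α} (h : l.getLast? ≠ some c) :
    dst (l ++ [c]) = dst l ++ [c] := by
  match l, h with
  | [], _ => rfl
  | [a], h =>
    have hac : a ≠ c := by simpa using h
    exact dst_cons_cons_of_ne hac []
  | a :: b :: l, h =>
    rw [List.getLast?_cons_cons] at h
    have ih := dst_concat_of_getLast?_ne h
    by_cases hab : a = b
    · subst hab; rw [List.cons_append, List.cons_append, dst_cons_cons_of_eq, ← List.cons_append,
        ih, dst_cons_cons_of_eq]
    · rw [List.cons_append, List.cons_append, dst_cons_cons_of_ne hab, ← List.cons_append, ih,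
        dst_cons_cons_of_ne hab, List.cons_append]

theorem dst_dst_concat (l : List α) (c : α) : dst (dst l ++ [c]) = dst (l ++ [c]) := by
  by_cases h : l.getLast? = some c
  · rw [dst_concat_of_getLast?_eq h, dst_concat_of_getLast?_eq (by rwa [getLast?_dst]), dst_idem]
  · rw [dst_concat_of_getLast?_ne h, dst_concat_of_getLast?_ne (by rwa [getLast?_dst]), dst_idem]

theorem dst_prefix_dst {l₁ l₂ : List α} (h : l₁ <+: l₂) : dst l₁ <+: dst l₂ := by
  obtain ⟨r, rfl⟩ := h
  induction r using List.reverseRecOn with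
  | nil => simp
  | append_singleton r c ih =>
    rw [← List.append_assoc]
    by_cases hc : (l₁ ++ r).getLast? = some c
    · rwa [dst_concat_of_getLast?_eq hc]
    · rw [dst_concat_of_getLast?_ne hc]
      exact ih.trans (List.prefix_append _ _)

theorem apply_eq_of_dst_map_eq {γ : Type} {l₁ : List α} {l₂ : List γ} {a : α} {c : γ}
    {f : α → β} {f' : γ → β} (h₁ : l₁.getLast? = some a) (h₂ : l₂.getLast? = some c)
    (h : dst (l₁.map f) = dst (l₂.map f')) : f a = f' c := by
  simpa [getLast?_dst, h₁, h₂] using congrArg List.getLast? h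

theorem List.IsChain.exists_next_of_dst_map {R : α → α → Prop} {l₁ l : List α}
    (hl : l.IsChain R) (h : l₁ <+: l) {a : α} (ha : l₁.getLast? = some a) (f : α → β) {b : β}
    (hb : dst (l₁.map f) ++ [b] <+: dst (l.map f)) :
    ∃ c, l₁ ++ [c] <+: l ∧ R a c ∧
      (f c = f a ∧ dst ((l₁ ++ [c]).map f) = dst (l₁.map f) ∨
        f c = b ∧ dst ((l₁ ++ [c]).map f) = dst (l₁.map f) ++ [b]) := by
  obtain ⟨_ | ⟨c, r⟩, rfl⟩ := h
  · simpa using hb.length_le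
  have hcr : l₁ ++ [c] <+: l₁ ++ c :: r := by simp
  have hR : R a c := by simpa [ha] using (List.isChain_append.mp (hl.prefix hcr)).2.2
  have hlast : (l₁.map f).getLast? = some (f a) := by simp [ha]
  refine ⟨c, hcr, hR, ?_⟩
  rw [List.map_append, List.map_singleton]
  by_cases hc : f c = f a
  · exact Or.inl ⟨hc, dst_concat_of_getLast?_eq (by rw [hlast, hc])⟩
  · have hne : (l₁.map f).getLast? ≠ some (f c) := by rw [hlast]; exact fun h => hc (by simp_all)
    have hpre : dst (l₁.map f) ++ [f c] <+: dst ((l₁ ++ c :: r).map f) := by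
      rw [← dst_concat_of_getLast?_ne hne, ← List.map_singleton, ← List.map_append]
      exact dst_prefix_dst (hcr.map f)
    have hcb : f c = b := by
      simpa using (List.prefix_of_prefix_length_le hpre hb (by simp)).eq_of_length (by simp)
    exact Or.inr ⟨hcb, hcb ▸ dst_concat_of_getLast?_ne hne⟩

end Destutter

section Labels

variable {k : ℕ} {G G' : Topo} {g : Fin k → G.V} {g' : Fin k → G'.V}

theorem mem_lab {i : Fin k} {v : G.V} : i ∈ lab G g v ↔ g i = v := by
  simp [lab]

theorem lab_apply (hg : Injective g) (i : Fin k) : lab G g (g i) = {i} := by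
  ext j
  simp [mem_lab, hg.eq_iff]

theorem lab_eq_empty_iff {v : G.V} : lab G g v = ∅ ↔ v ∉ Set.range g := by
  simp [Finset.eq_empty_iff_forall_notMem, mem_lab]

theorem apply_eq_iff_of_lab_eq {v : G.V} {v' : G'.V} (h : lab G g v = lab G' g' v') (i : Fin k) :
    g i = v ↔ g' i = v' := by
  rw [← mem_lab, ← mem_lab, h]

theorem comp_gInit_eq_of_lab_eq {A : Type} (P : ProcTemplate A) {x : G.V} {x' : G'.V}
    (h : lab G g x = lab G' g' x') : gInit P G' x' ∘ g' = gInit P G x ∘ g := by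
  ext i
  simp only [comp_apply, gInit, apply_eq_iff_of_lab_eq h i]

end Labels

namespace ProcTemplate

variable {A : Type} (P : ProcTemplate A)

def IntStep (q q' : P.Q) : Prop := ∃ a, P.δ q (Act.int a) q'

def IntReach : P.Q → P.Q → Prop := Relation.ReflTransGen P.IntStep

variable {P}

theorem IntReach.tok_iff {q q' : P.Q} (h : P.IntReach q q') : P.tok q ↔ P.tok q' := by
  induction h with
  | refl => rfl
  | tail _ step ih => exact ih.trans (P.int_tok step.choose_spec)

/-- Otherwise totality would yield an infinite path of internal actions only, which
`alternation` forbids. -/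
theorem exists_intReach_comm (q : P.Q) :
    ∃ q₁ σ q₂, P.IntReach q q₁ ∧ P.δ q₁ σ q₂ ∧ (σ = Act.snd ∨ σ = Act.rcv) := by
  by_contra! hcon
  have step : ∀ q₁ : {q₁ // P.IntReach q q₁}, ∃ q₂ : {q₂ // P.IntReach q q₂}, P.IntStep q₁ q₂ := by
    rintro ⟨q₁, hq₁⟩
    obtain ⟨σ, q₂, hδ⟩ := P.total q₁
    cases σ with
    | int a => exact ⟨⟨q₂, hq₁.tail ⟨a, hδ⟩⟩, a, hδ⟩
    | snd => exact absurd rfl (hcon q₁ _ q₂ hq₁ hδ).1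
    | rcv => exact absurd rfl (hcon q₁ _ q₂ hq₁ hδ).2
  choose next hnext using step
  let path : ℕ → {q₁ // P.IntReach q q₁} := fun n => next^[n] ⟨q, .refl⟩
  have hpath (n : ℕ) : P.IntStep (path n) (path (n + 1)) := by
    simp only [path, iterate_succ_apply']
    exact hnext _
  choose a ha using hpath
  obtain ⟨t, -, ht⟩ := (P.alternation _ _ ha).1 0
  simp at ht

theorem exists_intReach_snd {q : P.Q} (h : P.tok q) :
    ∃ q₁ q₂, P.IntReach q q₁ ∧ P.δ q₁ Act.snd q₂ := by
  obtain ⟨q₁, σ, q₂, hre, hδ, rfl | rfl⟩ := exists_intReach_comm q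
  · exact ⟨q₁, q₂, hre, hδ⟩
  · exact absurd (hre.tok_iff.mp h) (P.rcv_tok hδ).1

theorem exists_intReach_rcv {q : P.Q} (h : ¬ P.tok q) :
    ∃ q₁ q₂, P.IntReach q q₁ ∧ P.δ q₁ Act.rcv q₂ := by
  obtain ⟨q₁, σ, q₂, hre, hδ, rfl | rfl⟩ := exists_intReach_comm q
  · exact absurd (hre.tok_iff.mpr (P.snd_tok hδ).1) h
  · exact ⟨q₁, q₂, hre, hδ⟩

end ProcTemplate

section Reach

variable {A : Type} {k : ℕ} (P : ProcTemplate A) (G : Topo) (x : G.V) (g : Fin k → G.V)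

/-- `Reach P G x g s v w t`: some finite run of `P^G` ends in `s`, the token has travelled along
the walk `w` and sits at `v`, and `t` is the destuttered `g`-projection trace of the run. -/
inductive Reach : (G.V → P.Q) → G.V → List G.V → List (Fin k → P.Q) → Prop
  | init : Reach (gInit P G x) x [x] [gInit P G x ∘ g]
  | int {s v w t} (z : G.V) (a : A) (r : P.Q) : Reach s v w t → P.δ (s z) (Act.int a) r →
      Reach (update s z r) v w (dst (t ++ [update s z r ∘ g]))
  | tok {s v w t} (u : G.V) (qv qu : P.Q) : Reach s v w t → G.E v u →
      P.δ (s v) Act.snd qv → P.δ (s u) Act.rcv qu →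
      Reach (update (update s v qv) u qu) u (w ++ [u])
        (dst (t ++ [update (update s v qv) u qu ∘ g]))

variable {P G x g} {s : G.V → P.Q} {v : G.V} {w : List G.V} {t : List (Fin k → P.Q)}

namespace Reach

theorem getLast?_walk (h : Reach P G x g s v w t) : w.getLast? = some v := by
  induction h with
  | init => rfl
  | int _ _ _ _ _ ih => exact ih
  | tok => exact List.getLast?_concat

theorem getLast?_trace (h : Reach P G x g s v w t) : t.getLast? = some (s ∘ g) := by
  cases h with
  | init => rfl
  | int | tok => rw [getLast?_dst, List.getLast?_concat]

theorem dst_trace (h : Reach P G x g s v w t) : dst t = t := by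
  cases h with
  | init => rfl
  | int | tok => exact dst_idem _

theorem isWalkFrom (h : Reach P G x g s v w t) : IsWalkFrom G x w := by
  induction h with
  | init => exact ⟨List.cons_ne_nil _ _, rfl, List.isChain_singleton _⟩
  | int _ _ _ _ _ ih => exact ih
  | tok u _ _ h hE _ _ ih =>
    obtain ⟨hne, hhead, hchain⟩ := ih
    refine ⟨by simp, by rw [List.head?_append, hhead]; rfl, ?_⟩
    exact hchain.append (List.isChain_singleton _) (by simp [h.getLast?_walk, hE])

theorem tok_iff (h : Reach P G x g s v w t) (u : G.V) : P.tok (s u) ↔ u = v := by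
  induction h generalizing u with
  | init =>
    unfold gInit
    split_ifs with hu
    · exact iff_of_true P.tok_iotaT hu
    · exact iff_of_false P.not_tok_iotaN hu
  | int z _ _ _ hδ ih =>
    rcases eq_or_ne u z with rfl | hu
    · rw [update_self, ← (P.int_tok hδ)]; exact ih u
    · rw [update_of_ne hu]; exact ih u
  | @tok _ v _ _ u' _ _ _ hE hsnd hrcv ih =>
    have hvu : v ≠ u' := fun h => G.no_self_loops _ (h ▸ hE)
    rcases eq_or_ne u u' with rfl | hu
    · simp [(P.rcv_tok hrcv).2]
    rcases eq_or_ne u v with rfl | hv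
    · simp [(P.snd_tok hsnd).2, hu]
    · simp only [update_of_ne hu, update_of_ne hv, ih u, hv, hu]

end Reach

theorem intTrans_update {s : G.V → P.Q} {z : G.V} {a : A} {r : P.Q}
    (h : P.δ (s z) (Act.int a) r) : IntTrans P G s (update s z r) :=
  ⟨z, a, by rwa [update_self], fun _ hw => update_of_ne hw _ _⟩

theorem tokTrans_update {s : G.V → P.Q} {v u : G.V} {qv qu : P.Q} (hE : G.E v u)
    (hsnd : P.δ (s v) Act.snd qv) (hrcv : P.δ (s u) Act.rcv qu) :
    TokTrans P G s (update (update s v qv) u qu) := by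
  have hvu : v ≠ u := fun h => G.no_self_loops _ (h ▸ hE)
  refine ⟨v, u, hE, by rwa [update_of_ne hvu, update_self], by rwa [update_self],
    fun _ hv hu => ?_⟩
  rw [update_of_ne hu, update_of_ne hv]

theorem IsFinRun.concat {ρ : List (G.V → P.Q)} (h : IsFinRun P G x ρ) (hs : ρ.getLast? = some s)
    {s' : G.V → P.Q} (hstep : GStep P G s s') : IsFinRun P G x (ρ ++ [s']) := by
  obtain ⟨hne, hhead, hchain⟩ := h
  refine ⟨by simp, by rw [List.head?_append, hhead]; rfl, ?_⟩
  exact hchain.append (List.isChain_singleton _) (by simp [hs, hstep])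

theorem projTrace_concat (ρ : List (G.V → P.Q)) (s : G.V → P.Q) :
    projTrace P G g (ρ ++ [s]) = projTrace P G g ρ ++ [s ∘ g] := by
  simp only [projTrace, List.map_append, List.map_singleton]; rfl

theorem Reach.exists_isFinRun (h : Reach P G x g s v w t) :
    ∃ ρ, IsFinRun P G x ρ ∧ ρ.getLast? = some s ∧ t = dst (projTrace P G g ρ) := by
  induction h with
  | init => exact ⟨[gInit P G x], ⟨List.cons_ne_nil _ _, rfl, List.isChain_singleton _⟩, rfl, rfl⟩
  | @int s _ _ _ z a r _ hδ ih =>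
    obtain ⟨ρ, hρ, hlast, rfl⟩ := ih
    refine ⟨ρ ++ [update s z r], hρ.concat hlast (Or.inl (intTrans_update hδ)),
      List.getLast?_concat, ?_⟩
    rw [projTrace_concat, dst_dst_concat]
  | @tok s v _ _ u qv qu _ hE hsnd hrcv ih =>
    obtain ⟨ρ, hρ, hlast, rfl⟩ := ih
    refine ⟨ρ ++ [update (update s v qv) u qu],
      hρ.concat hlast (Or.inr (tokTrans_update hE hsnd hrcv)), List.getLast?_concat, ?_⟩
    rw [projTrace_concat, dst_dst_concat]

theorem IsFinRun.exists_reach {ρ : List (G.V → P.Q)} (h : IsFinRun P G x ρ) :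
    ∃ s v w, ρ.getLast? = some s ∧ Reach P G x g s v w (dst (projTrace P G g ρ)) := by
  induction ρ using List.reverseRecOn with
  | nil => exact absurd rfl h.1
  | append_singleton ρ s' ih =>
    obtain ⟨-, hhead, hchain⟩ := h
    rcases eq_or_ne ρ [] with rfl | hρ
    · obtain rfl : s' = gInit P G x := by simpa using hhead
      exact ⟨_, _, _, rfl, Reach.init⟩
    rw [List.head?_append_of_ne_nil _ hρ] at hhead
    obtain ⟨s, v, w, hlast, hreach⟩ := ih ⟨hρ, hhead, hchain.left_of_append⟩
    have hstep : GStep P G s s' := by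
      have := (List.isChain_append.mp hchain).2.2
      simpa [hlast] using this
    rw [projTrace_concat, ← dst_dst_concat]
    rcases hstep with ⟨z, a, hδ, hfix⟩ | ⟨v₀, u, hE, hsnd, hrcv, hfix⟩
    · rw [show s' = update s z (s' z) from eq_update_iff.mpr ⟨rfl, hfix⟩]
      exact ⟨_, v, w, List.getLast?_concat, hreach.int z a _ hδ⟩
    · obtain rfl : v₀ = v := (hreach.tok_iff v₀).mp (P.snd_tok hsnd).1
      have hs' : s' = update (update s v₀ (s' v₀)) u (s' u) := by
        refine eq_update_iff.mpr ⟨rfl, fun y hy => ?_⟩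
        rcases eq_or_ne y v₀ with rfl | hyv
        · rw [update_self]
        · rw [update_of_ne hyv, hfix y hyv hy]
      rw [hs']
      exact ⟨_, u, w ++ [u], List.getLast?_concat, hreach.tok u _ _ hE hsnd hrcv⟩

end Reach

section Moves

variable {A : Type} {k : ℕ} {P : ProcTemplate A} {G : Topo} {x : G.V} {g : Fin k → G.V}
  {s : G.V → P.Q} {v u : G.V} {w : List G.V} {t : List (Fin k → P.Q)}

namespace Reach

theorem intReach_of_notMem (h : Reach P G x g s v w t) {z : G.V} (hz : z ∉ Set.range g)
    {r : P.Q} (hr : P.IntReach (s z) r) : Reach P G x g (update s z r) v w t := by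
  induction hr with
  | refl => rwa [update_eq_self]
  | tail _ step ih =>
    have hlast := ih.getLast?_trace
    have := ih.int z step.choose _ (by rw [update_self]; exact step.choose_spec)
    rwa [update_idem, update_comp_eq_of_notMem_range _ _ hz,
      dst_concat_of_getLast?_eq (by rwa [update_comp_eq_of_notMem_range _ _ hz] at hlast),
      ih.dst_trace] at this

theorem tok_of_notMem_sender (h : Reach P G x g s v w t) (hE : G.E v u) (hv : v ∉ Set.range g)
    {qu : P.Q} (hrcv : P.δ (s u) Act.rcv qu) :
    ∃ s₂, s₂ ∘ g = update s u qu ∘ g ∧ Reach P G x g s₂ u (w ++ [u]) (dst (t ++ [s₂ ∘ g])) := by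
  have hvu : v ≠ u := fun h => G.no_self_loops _ (h ▸ hE)
  obtain ⟨q₁, q₂, hre, hsnd⟩ := P.exists_intReach_snd ((h.tok_iff v).mpr rfl)
  have h₂ := (h.intReach_of_notMem hv hre).tok u q₂ qu hE (by rwa [update_self])
    (by rwa [update_of_ne hvu.symm])
  refine ⟨_, ?_, h₂⟩
  rw [update_idem, update_comm hvu, update_comp_eq_of_notMem_range _ _ hv]

theorem tok_of_notMem_receiver (h : Reach P G x g s v w t) (hE : G.E v u)
    (hu : u ∉ Set.range g) {qv : P.Q} (hsnd : P.δ (s v) Act.snd qv) :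
    ∃ s₂, s₂ ∘ g = update s v qv ∘ g ∧ Reach P G x g s₂ u (w ++ [u]) (dst (t ++ [s₂ ∘ g])) := by
  have hvu : v ≠ u := fun h => G.no_self_loops _ (h ▸ hE)
  obtain ⟨q₁, q₂, hre, hrcv⟩ :=
    P.exists_intReach_rcv (fun htok => hvu ((h.tok_iff u).mp htok).symm)
  have h₂ := (h.intReach_of_notMem hu hre).tok u qv q₂ hE (by rwa [update_of_ne hvu])
    (by rwa [update_self])
  refine ⟨_, ?_, h₂⟩
  rw [update_comm hvu.symm, update_idem, update_comp_eq_of_notMem_range _ _ hu]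

theorem tok_of_notMem (h : Reach P G x g s v w t) (hE : G.E v u) (hv : v ∉ Set.range g)
    (hu : u ∉ Set.range g) : ∃ s₂, s₂ ∘ g = s ∘ g ∧ Reach P G x g s₂ u (w ++ [u]) t := by
  have hvu : v ≠ u := fun h => G.no_self_loops _ (h ▸ hE)
  obtain ⟨q₁, q₂, hre, hrcv⟩ :=
    P.exists_intReach_rcv (fun htok => hvu ((h.tok_iff u).mp htok).symm)
  have h₁ := h.intReach_of_notMem hu hre
  obtain ⟨s₂, hs₂, h₂⟩ := h₁.tok_of_notMem_sender hE hv (by rwa [update_self])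
  have hs : s₂ ∘ g = s ∘ g := by
    rw [hs₂, update_idem, update_comp_eq_of_notMem_range _ _ hu]
  refine ⟨s₂, hs, ?_⟩
  rwa [hs, dst_concat_of_getLast?_eq h.getLast?_trace, h.dst_trace] at h₂

/-- The vertices of `w'` between `v` and the next label `{j}` are unmarked, so the token hops
through them without changing the trace. -/
theorem transport (hg : Injective g) {w' : List G.V} (hw' : w'.IsChain G.E)
    {s : G.V → P.Q} {v : G.V} {w : List G.V} {t : List (Fin k → P.Q)} (h : Reach P G x g s v w t) (hw : w <+: w') (hv : v ∉ Set.range g) {j : Fin k}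
    (hj : dst (w.map (lab G g)) ++ [{j}] <+: dst (w'.map (lab G g)))
    {qu : P.Q} (hrcv : P.δ (s (g j)) Act.rcv qu) :
    ∃ s₂ w₂, s₂ ∘ g = update (s ∘ g) j qu ∧ w₂ <+: w' ∧
      dst (w₂.map (lab G g)) = dst (w.map (lab G g)) ++ [{j}] ∧
      Reach P G x g s₂ (g j) w₂ (dst (t ++ [s₂ ∘ g])) := by
  obtain ⟨u, hwu, hE, ⟨hlab, hdst⟩ | ⟨hlab, hdst⟩⟩ :=
    hw'.exists_next_of_dst_map hw h.getLast?_walk (lab G g) hj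
  · have hu : u ∉ Set.range g := by rwa [← lab_eq_empty_iff, hlab, lab_eq_empty_iff]
    obtain ⟨s₁, hs₁, h₁⟩ := h.tok_of_notMem hE hv hu
    have hrcv₁ : P.δ (s₁ (g j)) Act.rcv qu := by rwa [← comp_apply (f := s₁), hs₁]
    obtain ⟨s₂, w₂, hs₂, hw₂, hdst₂, h₂⟩ := h₁.transport hg hw' hwu hu (hdst ▸ hj) hrcv₁
    exact ⟨s₂, w₂, hs₂.trans (by rw [hs₁]), hw₂, hdst₂.trans (by rw [hdst]), h₂⟩
  · obtain rfl : g j = u := mem_lab.mp (hlab ▸ Finset.mem_singleton_self j)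
    obtain ⟨s₂, hs₂, h₂⟩ := h.tok_of_notMem_sender hE hv hrcv
    exact ⟨s₂, w ++ [g j], by rw [hs₂, update_comp_eq_of_injective _ hg], hwu, hdst, h₂⟩
termination_by w'.length - w.length
decreasing_by have := hwu.length_le; simp only [List.length_append, List.length_singleton] at this ⊢; omega

end Reach

end Moves

section Simulation

variable {A : Type} {k : ℕ} {P : ProcTemplate A} {G G' : Topo} {x : G.V} {x' : G'.V}
  {g : Fin k → G.V} {g' : Fin k → G'.V} {w' : List G'.V}
  {s : G.V → P.Q} {v u : G.V} {w : List G.V} {t : List (Fin k → P.Q)}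

/-- The invariant of the simulation of `P^G` in `P^{G'}` along the walk `w'`. -/
def Simulated (P : ProcTemplate A) (x' : G'.V) (g : Fin k → G.V) (g' : Fin k → G'.V)
    (w' : List G'.V) (s : G.V → P.Q) (w : List G.V) (t : List (Fin k → P.Q)) : Prop :=
  ∃ s' v' w₁, Reach P G' x' g' s' v' w₁ t ∧ w₁ <+: w' ∧
    dst (w₁.map (lab G' g')) = dst (w.map (lab G g)) ∧ s' ∘ g' = s ∘ g

theorem simulated_init (hw' : IsWalkFrom G' x' w')
    (hpre : dst ([x].map (lab G g)) <+: dst (w'.map (lab G' g'))) :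
    Simulated P x' g g' w' (gInit P G x) [x] [gInit P G x ∘ g] := by
  have hx : lab G g x = lab G' g' x' := by
    have := List.singleton_prefix_iff_head?_eq_some.mp hpre
    rw [head?_dst, List.head?_map, hw'.2.1] at this
    exact (Option.some_inj.mp this).symm
  refine ⟨gInit P G' x', x', [x'], ?_, List.singleton_prefix_iff_head?_eq_some.mpr hw'.2.1,
    by simp [hx], comp_gInit_eq_of_lab_eq P hx⟩
  rw [← comp_gInit_eq_of_lab_eq P hx]
  exact Reach.init

namespace Simulated

theorem int (hg : Injective g) (hg' : Injective g') (h : Simulated P x' g g' w' s w t)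
    {z : G.V} {a : A} {r : P.Q} (hδ : P.δ (s z) (Act.int a) r) :
    Simulated P x' g g' w' (update s z r) w (dst (t ++ [update s z r ∘ g])) := by
  obtain ⟨s', v', w₁, h', hw₁, hdst, hs'⟩ := h
  by_cases hz : z ∈ Set.range g
  · obtain ⟨i, rfl⟩ := hz
    have hcomp : update s' (g' i) r ∘ g' = update s (g i) r ∘ g := by
      rw [update_comp_eq_of_injective _ hg', update_comp_eq_of_injective _ hg, hs']
    have hδ' : P.δ (s' (g' i)) (Act.int a) r := by rwa [← comp_apply (f := s'), hs']
    exact ⟨_, v', w₁, hcomp ▸ h'.int (g' i) a r hδ', hw₁, hdst, hcomp⟩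
  · rw [update_comp_eq_of_notMem_range _ _ hz, ← hs',
      dst_concat_of_getLast?_eq h'.getLast?_trace, h'.dst_trace]
    exact ⟨s', v', w₁, h', hw₁, hdst, by rw [hs', update_comp_eq_of_notMem_range _ _ hz]⟩

theorem tok_of_lab_eq (hg : Injective g) (h : Simulated P x' g g' w' s w t)
    (hlast : w.getLast? = some v) (hE : G.E v u) {qv qu : P.Q}
    (hlab : lab G g u = lab G g v) :
    Simulated P x' g g' w' (update (update s v qv) u qu) (w ++ [u])
      (dst (t ++ [update (update s v qv) u qu ∘ g])) := by
  obtain ⟨s', v', w₁, h', hw₁, hdst, hs'⟩ := h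
  have hvu : v ≠ u := fun h => G.no_self_loops _ (h ▸ hE)
  have hv : v ∉ Set.range g := by
    rintro ⟨i, rfl⟩
    exact hvu (mem_lab.mp (hlab ▸ lab_apply hg i ▸ Finset.mem_singleton_self i))
  have hu : u ∉ Set.range g := by rwa [← lab_eq_empty_iff, hlab, lab_eq_empty_iff]
  have hcomp : update (update s v qv) u qu ∘ g = s ∘ g := by
    rw [update_comp_eq_of_notMem_range _ _ hu, update_comp_eq_of_notMem_range _ _ hv]
  rw [hcomp, ← hs', dst_concat_of_getLast?_eq h'.getLast?_trace, h'.dst_trace]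
  refine ⟨s', v', w₁, h', hw₁, ?_, by rw [hs', hcomp]⟩
  rw [List.map_append, List.map_singleton, hlab, dst_concat_of_getLast?_eq (by simp [hlast]), hdst]

theorem tok_of_notMem (hg : Injective g) (hg' : Injective g') (hw' : w'.IsChain G'.E)
    (h : Simulated P x' g g' w' s w t) (hlast : w.getLast? = some v) (hv : v ∉ Set.range g)
    {qv qu : P.Q} (hrcv : P.δ (s u) Act.rcv qu) (hlab : lab G g u ≠ lab G g v)
    (hpre : dst ((w ++ [u]).map (lab G g)) <+: dst (w'.map (lab G' g'))) :
    Simulated P x' g g' w' (update (update s v qv) u qu) (w ++ [u])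
      (dst (t ++ [update (update s v qv) u qu ∘ g])) := by
  obtain ⟨s', v', w₁, h', hw₁, hdst, hs'⟩ := h
  obtain ⟨j, rfl⟩ : u ∈ Set.range g := by
    by_contra hu
    exact hlab (by rw [lab_eq_empty_iff.mpr hu, lab_eq_empty_iff.mpr hv])
  have hv' : v' ∉ Set.range g' := by
    rwa [← lab_eq_empty_iff, apply_eq_of_dst_map_eq h'.getLast?_walk hlast hdst,
      lab_eq_empty_iff]
  have hdstu : dst ((w ++ [g j]).map (lab G g)) = dst (w.map (lab G g)) ++ [{j}] := by
    rw [List.map_append, List.map_singleton,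
      dst_concat_of_getLast?_ne (by simpa [hlast] using hlab.symm), lab_apply hg]
  have hrcv' : P.δ (s' (g' j)) Act.rcv qu := by rwa [← comp_apply (f := s'), hs']
  obtain ⟨s₂, w₂, hs₂, hw₂, hdst₂, h₂⟩ :=
    h'.transport hg' hw' hw₁ hv' (by rwa [hdst, ← hdstu]) hrcv'
  have hcomp : s₂ ∘ g' = update (update s v qv) (g j) qu ∘ g := by
    rw [hs₂, update_comp_eq_of_injective _ hg, update_comp_eq_of_notMem_range _ _ hv, hs']
  exact ⟨s₂, g' j, w₂, hcomp ▸ h₂, hw₂, by rw [hdst₂, hdst, hdstu], hcomp⟩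

theorem tok_of_mem (hg : Injective g) (hg' : Injective g') (hw' : w'.IsChain G'.E)
    (h : Simulated P x' g g' w' s w t) {i : Fin k} (hlast : w.getLast? = some (g i))
    (hE : G.E (g i) u) {qv qu : P.Q} (hsnd : P.δ (s (g i)) Act.snd qv)
    (hrcv : P.δ (s u) Act.rcv qu)
    (hpre : dst ((w ++ [u]).map (lab G g)) <+: dst (w'.map (lab G' g'))) :
    Simulated P x' g g' w' (update (update s (g i) qv) u qu) (w ++ [u])
      (dst (t ++ [update (update s (g i) qv) u qu ∘ g])) := by
  obtain ⟨s', v', w₁, h', hw₁, hdst, hs'⟩ := h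
  obtain rfl : g' i = v' :=
    (apply_eq_iff_of_lab_eq (apply_eq_of_dst_map_eq hlast h'.getLast?_walk hdst.symm) i).mp rfl
  have hlab : lab G g u ≠ lab G g (g i) := fun hlab =>
    G.no_self_loops u (mem_lab.mp (hlab ▸ lab_apply hg i ▸ Finset.mem_singleton_self i) ▸ hE)
  have hdstu : dst ((w ++ [u]).map (lab G g)) = dst (w.map (lab G g)) ++ [lab G g u] := by
    rw [List.map_append, List.map_singleton,
      dst_concat_of_getLast?_ne (by simpa [hlast] using hlab.symm)]
  obtain ⟨u', hwu', hE', ⟨hlab', -⟩ | ⟨hlab', hdst'⟩⟩ :=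
    hw'.exists_next_of_dst_map hw₁ h'.getLast?_walk (lab G' g') (b := lab G g u)
      (by rwa [hdst, ← hdstu])
  · exact absurd (mem_lab.mp (hlab' ▸ lab_apply hg' i ▸ Finset.mem_singleton_self i) ▸ hE')
      (G'.no_self_loops u')
  have hsnd' : P.δ (s' (g' i)) Act.snd qv := by rwa [← comp_apply (f := s'), hs']
  have hdst₂ : dst ((w₁ ++ [u']).map (lab G' g')) = dst ((w ++ [u]).map (lab G g)) := by
    rw [hdst', hdst, hdstu]
  by_cases hu : u ∈ Set.range g
  · obtain ⟨j, rfl⟩ := hu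
    obtain rfl : g' j = u' := (apply_eq_iff_of_lab_eq hlab'.symm j).mp rfl
    have hrcv' : P.δ (s' (g' j)) Act.rcv qu := by rwa [← comp_apply (f := s'), hs']
    have hcomp : update (update s' (g' i) qv) (g' j) qu ∘ g' =
        update (update s (g i) qv) (g j) qu ∘ g := by
      simp only [update_comp_eq_of_injective _ hg, update_comp_eq_of_injective _ hg', hs']
    exact ⟨_, g' j, _, hcomp ▸ h'.tok (g' j) qv qu hE' hsnd' hrcv', hwu', hdst₂, hcomp⟩
  · have hu' : u' ∉ Set.range g' := by rwa [← lab_eq_empty_iff, hlab', lab_eq_empty_iff]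
    obtain ⟨s₂, hs₂, h₂⟩ := h'.tok_of_notMem_receiver hE' hu' hsnd'
    have hcomp : s₂ ∘ g' = update (update s (g i) qv) u qu ∘ g := by
      rw [hs₂, update_comp_eq_of_notMem_range _ _ hu, update_comp_eq_of_injective _ hg',
        update_comp_eq_of_injective _ hg, hs']
    exact ⟨s₂, u', w₁ ++ [u'], hcomp ▸ h₂, hwu', hdst₂, hcomp⟩

theorem tok (hg : Injective g) (hg' : Injective g') (hw' : w'.IsChain G'.E)
    (h : Simulated P x' g g' w' s w t) (hlast : w.getLast? = some v) (hE : G.E v u)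
    {qv qu : P.Q} (hsnd : P.δ (s v) Act.snd qv) (hrcv : P.δ (s u) Act.rcv qu)
    (hpre : dst ((w ++ [u]).map (lab G g)) <+: dst (w'.map (lab G' g'))) :
    Simulated P x' g g' w' (update (update s v qv) u qu) (w ++ [u])
      (dst (t ++ [update (update s v qv) u qu ∘ g])) := by
  by_cases hlab : lab G g u = lab G g v
  · exact h.tok_of_lab_eq hg hlast hE hlab
  by_cases hv : v ∈ Set.range g
  · obtain ⟨i, rfl⟩ := hv
    exact h.tok_of_mem hg hg' hw' hlast hE hsnd hrcv hpre
  · exact h.tok_of_notMem hg hg' hw' hlast hv hrcv hlab hpre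

end Simulated

theorem Reach.simulated (hg : Injective g) (hg' : Injective g') (hw' : IsWalkFrom G' x' w')
    (h : Reach P G x g s v w t) (hpre : dst (w.map (lab G g)) <+: dst (w'.map (lab G' g'))) :
    Simulated P x' g g' w' s w t := by
  induction h with
  | init => exact simulated_init hw' hpre
  | int _ _ _ _ hδ ih => exact (ih hpre).int hg hg' hδ
  | tok u _ _ h hE hsnd hrcv ih =>
    have hpre' := (dst_prefix_dst ((List.prefix_append _ [u]).map (lab G g))).trans hpre
    exact (ih hpre').tok hg hg' hw'.2.2 h.getLast?_walk hE hsnd hrcv hpre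

end Simulation

theorem finTraces_subset {A : Type} {k : ℕ} {G G' : Topo} {x : G.V} {x' : G'.V}
    {g : Fin k → G.V} (hg : Injective g) {g' : Fin k → G'.V} (hg' : Injective g')
    (hwalks :
      { l : List (Finset (Fin k)) | ∃ w, IsWalkFrom G x w ∧ l = dst (w.map (lab G g)) } ⊆
      { l : List (Finset (Fin k)) | ∃ w', IsWalkFrom G' x' w' ∧ l = dst (w'.map (lab G' g')) })
    (P : ProcTemplate A) :
    { t : List (Fin k → P.Q) | ∃ ρ, IsFinRun P G x ρ ∧ t = dst (projTrace P G g ρ) } ⊆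
    { t : List (Fin k → P.Q) | ∃ ρ', IsFinRun P G' x' ρ' ∧ t = dst (projTrace P G' g' ρ') } := by
  rintro _ ⟨ρ, hρ, rfl⟩
  obtain ⟨s, v, w, -, h⟩ := hρ.exists_reach (g := g)
  obtain ⟨w', hw', hww'⟩ := hwalks ⟨w, h.isWalkFrom, rfl⟩
  obtain ⟨s', v', w₁, h', -⟩ := h.simulated hg hg' hw' (hww' ▸ List.prefix_refl _)
  obtain ⟨ρ', hρ', -, ht⟩ := h'.exists_isFinRun
  exact ⟨ρ', hρ', ht⟩

theorem stmt16_general {A : Type} {k : ℕ}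
    (G G' : Topo) (x : G.V) (x' : G'.V)
    (g : Fin k → G.V) (hg : Function.Injective g)
    (g' : Fin k → G'.V) (hg' : Function.Injective g')
    (hwalks :
      { l : List (Finset (Fin k)) | ∃ w, IsWalkFrom G x w ∧ l = dst (w.map (lab G g)) } =
      { l : List (Finset (Fin k)) | ∃ w', IsWalkFrom G' x' w' ∧ l = dst (w'.map (lab G' g')) })
    (P : ProcTemplate A) :
    { t : List (Fin k → P.Q) | ∃ ρ, IsFinRun P G x ρ ∧ t = dst (projTrace P G g ρ) } =
    { t : List (Fin k → P.Q) | ∃ ρ', IsFinRun P G' x' ρ' ∧ t = dst (projTrace P G' g' ρ') } :=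
  (finTraces_subset hg hg' hwalks.subset P).antisymm (finTraces_subset hg' hg hwalks.symm.subset P)

/-- finite-trace Reduction Theorem: if `G, ḡ` and `G', ḡ'`
realize the same set of destuttered label-sequences of walks from the initial
vertices, then for every process template `P` the systems `P^G` and `P^{G'}`
realize the same set of destuttered projection traces of finite runs. -/
theorem stmt16 {A : Type} [Fintype A] [Nonempty A] {k : ℕ}
    (G G' : Topo) (x : G.V) (x' : G'.V)
    (g : Fin k → G.V) (hg : Function.Injective g)
    (g' : Fin k → G'.V) (hg' : Function.Injective g')
    (hwalks :
      { l : List (Finset (Fin k)) | ∃ w, IsWalkFrom G x w ∧ l = dst (w.map (lab G g)) } =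
      { l : List (Finset (Fin k)) | ∃ w', IsWalkFrom G' x' w' ∧ l = dst (w'.map (lab G' g')) })
    (P : ProcTemplate A) :
    { t : List (Fin k → P.Q) | ∃ ρ, IsFinRun P G x ρ ∧ t = dst (projTrace P G g ρ) } =
    { t : List (Fin k → P.Q) | ∃ ρ', IsFinRun P G' x' ρ' ∧ t = dst (projTrace P G' g' ρ') } :=
  stmt16_general G G' x x' g hg g' hg' hwalks P
end

section
/- Let P be a process template. For every local state q with ¬tok q there is a finite sequence q = q₀, q₁, …, q_r with (q_i, a_i, q_{i+1}) ∈ δ for some a_i ∈ Σint for each i < r, such that q_r has an outgoing rcv-transition, i.e., (q_r, rcv, q') ∈ δ for some q'. Dually, for every q with tok q there is such a finite sequence of internal transitions ending in a state with an outgoing snd-transition. -/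
/-- One internal step of the process template `P`. -/
def IntStep {A : Type} (P : ProcTemplate A) (q q' : P.Q) : Prop :=
  ∃ a, P.δ q (Act.int a) q'

namespace ProcTemplate

variable {A : Type} (P : ProcTemplate A)

theorem tok_iff_of_reflTransGen_intStep {q r : P.Q}
    (h : Relation.ReflTransGen (IntStep P) q r) : P.tok q ↔ P.tok r := by
  induction h with
  | refl => rfl
  | tail _ hstep ih =>
    obtain ⟨_, hδ⟩ := hstep
    exact ih.trans (P.int_tok hδ)

theorem eq_empty_of_forall_exists_int_step (S : Set P.Q)
    (hS : ∀ r ∈ S, ∃ a r', P.δ r (Act.int a) r' ∧ r' ∈ S) : S = ∅ := by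
  by_contra hne
  obtain ⟨q, hq⟩ := Set.nonempty_iff_ne_empty.2 hne
  choose act next hδ hnext using fun r : S => hS r r.2
  let path : ℕ → S := fun n => n.rec ⟨q, hq⟩ fun _ r => ⟨next r, hnext r⟩
  obtain ⟨t, -, hsnd | hrcv⟩ :=
    (P.alternation (fun n => (path n).1) (fun n => Act.int (act (path n)))
      fun n => hδ (path n)).1 0
  · cases hsnd
  · cases hrcv

theorem exists_reflTransGen_intStep_snd_or_rcv (q : P.Q) :
    ∃ r, Relation.ReflTransGen (IntStep P) q r ∧
      ((∃ r', P.δ r Act.snd r') ∨ ∃ r', P.δ r Act.rcv r') := by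
  by_contra! h
  refine (P.eq_empty_of_forall_exists_int_step {r | Relation.ReflTransGen (IntStep P) q r}
    fun r hr => ?_).subset Relation.ReflTransGen.refl
  obtain ⟨σ, r', hδ⟩ := P.total r
  cases σ with
  | int a => exact ⟨a, r', hδ, hr.tail ⟨a, hδ⟩⟩
  | snd => exact absurd hδ ((h r hr).1 r')
  | rcv => exact absurd hδ ((h r hr).2 r')

end ProcTemplate

theorem List.exists_isChain_getLast?_of_reflTransGen {α : Type*} {R : α → α → Prop} {a b : α}
    (h : Relation.ReflTransGen R a b) :
    ∃ l : List α, l.head? = some a ∧ l.IsChain R ∧ l.getLast? = some b := by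
  obtain ⟨l, hchain, hlast⟩ := List.exists_isChain_cons_of_relationReflTransGen h
  exact ⟨a :: l, rfl, hchain, by rw [List.getLast?_eq_some_getLast (List.cons_ne_nil a l), hlast]⟩

theorem stmt17_general {A : Type}
    (P : ProcTemplate A) (q : P.Q) :
    (¬ P.tok q → ∃ l : List P.Q, l.head? = some q ∧ List.Chain' (IntStep P) l ∧
      ∃ qr, l.getLast? = some qr ∧ ∃ q', P.δ qr Act.rcv q') ∧
    (P.tok q → ∃ l : List P.Q, l.head? = some q ∧ List.Chain' (IntStep P) l ∧
      ∃ qr, l.getLast? = some qr ∧ ∃ q', P.δ qr Act.snd q') := by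
  obtain ⟨r, hqr, hexit⟩ := P.exists_reflTransGen_intStep_snd_or_rcv q
  have htok := P.tok_iff_of_reflTransGen_intStep hqr
  obtain ⟨l, hhead, hchain, hlast⟩ := List.exists_isChain_getLast?_of_reflTransGen hqr
  rcases hexit with ⟨r', hsnd⟩ | ⟨r', hrcv⟩
  · exact ⟨fun hq => absurd (htok.2 (P.snd_tok hsnd).1) hq,
      fun _ => ⟨l, hhead, hchain, r, hlast, r', hsnd⟩⟩
  · exact ⟨fun _ => ⟨l, hhead, hchain, r, hlast, r', hrcv⟩,
      fun hq => absurd (htok.1 hq) (P.rcv_tok hrcv).1⟩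

/-- from any tokenless state there is a finite sequence of
internal transitions to a state with an outgoing `rcv`-transition; dually, from
any token-holding state there is a finite sequence of internal transitions to a
state with an outgoing `snd`-transition. -/
theorem stmt17 {A : Type} [Fintype A] [Nonempty A]
    (P : ProcTemplate A) (q : P.Q) :
    (¬ P.tok q → ∃ l : List P.Q, l.head? = some q ∧ List.Chain' (IntStep P) l ∧
      ∃ qr, l.getLast? = some qr ∧ ∃ q', P.δ qr Act.rcv q') ∧
    (P.tok q → ∃ l : List P.Q, l.head? = some q ∧ List.Chain' (IntStep P) l ∧
      ∃ qr, l.getLast? = some qr ∧ ∃ q', P.δ qr Act.snd q') :=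
  stmt17_general P q
end

section
/- For every process template P and every topology G, every infinite run s₀ s₁ s₂ … of the token-passing system P^G contains infinitely many token-passing transitions; equivalently, for infinitely many t the token holder of s_{t+1} differs from the token holder of s_t. -/
/-!
Suppose that from some time on a run performs only internal transitions. Each of them moves a
single process, so by pigeonhole some process `v₀` moves infinitely often, and between two of its
moves its local state is frozen. Reading off the local states of `v₀` at its successive moves
gives an infinite path of `P` with internal actions only, which the alternation condition forbids.
A token-passing transition follows an edge of `G`, which is not a self-loop, so the token
changes hands.
-/

theorem Nat.eq_of_forall_succ_eq {β : Type*} {f : ℕ → β} {a b : ℕ} (hab : a ≤ b)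
    (h : ∀ m, a ≤ m → m < b → f (m + 1) = f m) : f b = f a := by
  induction b, hab using Nat.le_induction with
  | base => rfl
  | succ b hab ih =>
    rw [h b hab (Nat.lt_succ_self b), ih fun m ham hmb => h m ham (hmb.trans (Nat.lt_succ_self b))]

theorem ProcTemplate.not_forall_int_path {A : Type} (P : ProcTemplate A) (q : ℕ → P.Q)
    (a : ℕ → A) : ¬ ∀ t, P.δ (q t) (Act.int (a t)) (q (t + 1)) := fun h => by
  obtain ⟨t, -, ht⟩ := (P.alternation q (fun t => Act.int (a t)) h).1 0
  rcases ht with ht | ht <;> cases ht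

section

variable {A : Type} (P : ProcTemplate A) (G : Topo)

theorem not_forall_intTrans (s : ℕ → G.V → P.Q) : ¬ ∀ t, IntTrans P G (s t) (s (t + 1)) := by
  intro h
  choose v a hδ hfix using h
  obtain ⟨v₀, hv₀⟩ := Finite.exists_infinite_fiber v
  have hinf : {m | v m = v₀}.Infinite := Set.infinite_coe_iff.mp hv₀
  set N := Nat.nth (v · = v₀)
  have hN : ∀ k, v (N k) = v₀ := Nat.nth_mem_of_infinite hinf
  have hfrozen : ∀ k, s (N (k + 1)) v₀ = s (N k + 1) v₀ := fun k =>
    Nat.eq_of_forall_succ_eq (f := (s · v₀)) (Nat.nth_strictMono hinf k.lt_succ_self)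
      fun m hkm hmk => hfix m v₀ fun hm => (Nat.le_nth_of_lt_nth_succ hmk hm.symm).not_gt hkm
  refine P.not_forall_int_path (fun k => s (N k) v₀) (fun k => a (N k)) fun k => ?_
  simpa only [hfrozen, hN k] using hδ (N k)

variable {P G}

theorem TokTrans.exists_tok_ne {s s' : G.V → P.Q} (h : TokTrans P G s s') :
    ∃ v w : G.V, v ≠ w ∧ P.tok (s v) ∧ P.tok (s' w) := by
  obtain ⟨v, w, hE, hsnd, hrcv, -⟩ := h
  exact ⟨v, w, fun hvw => G.no_self_loops v (hvw ▸ hE), (P.snd_tok hsnd).1, (P.rcv_tok hrcv).2⟩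

end

theorem stmt18_general {A : Type}
    (P : ProcTemplate A) (G : Topo)
    (s : ℕ → G.V → P.Q)
    (hstep : ∀ t, GStep P G (s t) (s (t + 1))) :
    (∀ T : ℕ, ∃ t, T ≤ t ∧ TokTrans P G (s t) (s (t + 1))) ∧
    (∀ T : ℕ, ∃ t, T ≤ t ∧ ∃ v w : G.V, v ≠ w ∧ P.tok (s t v) ∧ P.tok (s (t + 1) w)) := by
  have hTok : ∀ T : ℕ, ∃ t, T ≤ t ∧ TokTrans P G (s t) (s (t + 1)) := by
    intro T
    by_contra! hno
    exact not_forall_intTrans P G (fun t => s (T + t)) fun t =>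
      (hstep (T + t)).resolve_right (hno _ (Nat.le_add_right T t))
  refine ⟨hTok, fun T => ?_⟩
  obtain ⟨t, hTt, htok⟩ := hTok T
  exact ⟨t, hTt, htok.exists_tok_ne⟩

/-- every infinite run of `P^G` contains infinitely many
token-passing transitions; equivalently, for infinitely many `t` the token
holder of `s (t+1)` differs from the token holder of `s t`. -/
theorem stmt18 {A : Type} [Fintype A] [Nonempty A]
    (P : ProcTemplate A) (G : Topo) (x : G.V)
    (s : ℕ → G.V → P.Q) (h0 : s 0 = gInit P G x)
    (hstep : ∀ t, GStep P G (s t) (s (t + 1))) :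
    (∀ T : ℕ, ∃ t, T ≤ t ∧ TokTrans P G (s t) (s (t + 1))) ∧
    (∀ T : ℕ, ∃ t, T ≤ t ∧ ∃ v w : G.V, v ≠ w ∧ P.tok (s t v) ∧ P.tok (s (t + 1) w)) :=
  stmt18_general P G s hstep
end
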